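/- arXiv:math/0703240 — 2 statements merged into one kernel-verified Lean document; each statement's English description precedes it below -/
import Mathlib

section
/- Let r : ℤ → ℝ satisfy ∑_{j∈ℤ} |r(j)| < ∞, and let 0 ≤ a < b be real numbers. Then (1/n)·∑_{i=⌊na⌋+1}^{⌊nb⌋} ∑_{j=⌊na⌋+1}^{⌊nb⌋} r(i − j) → (b − a)·∑_{j∈ℤ} r(j) as n → ∞. -/
/-!
Grouping the pairs `(i, j)` of the block by `k = i - j` turns the double sum into
`∑ₖ (N - |k|)⁺ r(k)`, where `N = ⌊nb⌋ - ⌊na⌋ ~ n(b - a)` is the side of the block. After division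
by `n`, each weight `(N - |k|)⁺ / n` tends to `b - a` and all of them are bounded by a constant,
so dominated convergence for series (Tannery's theorem) gives the limit.
-/

open Filter Finset Topology

lemma card_Ioc_product_filter_sub_eq (A B k : ℤ) :
    #{p ∈ Ioc A B ×ˢ Ioc A B | p.1 - p.2 = k} = (B - A - |k|).toNat :=
  calc #{p ∈ Ioc A B ×ˢ Ioc A B | p.1 - p.2 = k}
      _ = #(Ioc (max A (A - k)) (min B (B - k))) := by
        apply card_nbij' (fun p => p.2) (fun x => (x + k, x))
        · intro p hp
          simp only [coe_filter, mem_product, mem_Ioc, Set.mem_ofPred_eq] at hp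
          simp only [coe_Ioc, Set.mem_Ioc, max_lt_iff, le_min_iff]
          omega
        · intro x hx
          simp only [coe_Ioc, Set.mem_Ioc, max_lt_iff, le_min_iff] at hx
          simp only [coe_filter, mem_product, mem_Ioc, Set.mem_ofPred_eq]
          omega
        · rintro ⟨i, j⟩ hp
          simp only [coe_filter, Set.mem_ofPred_eq] at hp
          simp only [Prod.mk.injEq, and_true]
          omega
        · intro x _
          rfl
      _ = (B - A - |k|).toNat := by
        rw [Int.card_Ioc]
        congr 1
        rcases abs_cases k with ⟨hk, hk0⟩ | ⟨hk, hk0⟩ <;> rw [hk] <;> omega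

lemma sum_Ioc_sum_Ioc_sub_eq_tsum {M : Type*} [AddCommMonoid M] [TopologicalSpace M]
    (f : ℤ → M) (A B : ℤ) :
    ∑ i ∈ Ioc A B, ∑ j ∈ Ioc A B, f (i - j) = ∑' k, (B - A - |k|).toNat • f k := by
  set s := Ioc A B ×ˢ Ioc A B
  have hsupp : ∀ k ∉ s.image (fun p => p.1 - p.2), (B - A - |k|).toNat • f k = 0 := by
    intro k hk
    rw [← card_Ioc_product_filter_sub_eq, card_eq_zero.2, zero_smul]
    exact filter_eq_empty_iff.2 fun p hp hpk => hk (mem_image.2 ⟨p, hp, hpk⟩)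
  rw [← sum_product', sum_comp f (fun p : ℤ × ℤ => p.1 - p.2), tsum_eq_sum hsupp]
  simp only [card_Ioc_product_filter_sub_eq, s]

lemma natCast_toNat_div_eq_max {K : Type*} [Field K] [LinearOrder K] [IsStrictOrderedRing K]
    (z : ℤ) (n : ℕ) : ((z.toNat : ℕ) : K) / n = max ((z : K) / n) 0 := by
  rw [← zero_div (n : K), max_div_div_right n.cast_nonneg, ← Int.cast_natCast, Int.toNat_eq_max,
    Int.cast_max, Int.cast_zero]

lemma tendsto_toNat_sub_abs_div_atTop {A B : ℕ → ℤ} {c : ℝ} (hc : 0 ≤ c)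
    (hAB : Tendsto (fun n : ℕ => ((B n - A n : ℤ) : ℝ) / n) atTop (𝓝 c)) (k : ℤ) :
    Tendsto (fun n : ℕ => ((B n - A n - |k|).toNat : ℝ) / n) atTop (𝓝 c) := by
  have hk : Tendsto (fun n : ℕ => ((B n - A n : ℤ) : ℝ) / n - |(k : ℝ)| / n) atTop (𝓝 (c - 0)) :=
    hAB.sub (tendsto_const_div_atTop_nhds_zero_nat _)
  rw [sub_zero] at hk
  convert hk.max (tendsto_const_nhds (x := (0 : ℝ))) using 1
  · ext n
    rw [natCast_toNat_div_eq_max, Int.cast_sub, sub_div, Int.cast_abs]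
  · rw [max_eq_left hc]

lemma eventually_toNat_sub_abs_div_le {A B : ℕ → ℤ} {c : ℝ}
    (hAB : Tendsto (fun n : ℕ => ((B n - A n : ℤ) : ℝ) / n) atTop (𝓝 c)) :
    ∀ᶠ n : ℕ in atTop, ∀ k : ℤ, ((B n - A n - |k|).toNat : ℝ) / n ≤ |c| + 1 := by
  have hlt : c < |c| + 1 := (le_abs_self c).trans_lt (lt_add_one _)
  filter_upwards [hAB.eventually (gt_mem_nhds hlt)] with n hn k
  have hle : (B n - A n - |k|).toNat ≤ (B n - A n).toNat :=
    Int.toNat_le_toNat (by linarith [abs_nonneg k])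
  calc ((B n - A n - |k|).toNat : ℝ) / n ≤ ((B n - A n).toNat : ℝ) / n := by gcongr
    _ = max (((B n - A n : ℤ) : ℝ) / n) 0 := natCast_toNat_div_eq_max _ _
    _ ≤ |c| + 1 := max_le hn.le (by positivity)

theorem tendsto_smul_sum_Ioc_sum_Ioc_sub {E : Type*} [NormedAddCommGroup E] [NormedSpace ℝ E]
    [CompleteSpace E] {r : ℤ → E} (hr : Summable fun j => ‖r j‖) {A B : ℕ → ℤ} {c : ℝ}
    (hc : 0 ≤ c) (hAB : Tendsto (fun n : ℕ => ((B n - A n : ℤ) : ℝ) / n) atTop (𝓝 c)) :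
    Tendsto (fun n : ℕ => (1 / (n : ℝ)) •
        ∑ i ∈ Ioc (A n) (B n), ∑ j ∈ Ioc (A n) (B n), r (i - j))
      atTop (𝓝 (c • ∑' j, r j)) := by
  have hweights : ∀ n : ℕ, (1 / (n : ℝ)) •
      ∑ i ∈ Ioc (A n) (B n), ∑ j ∈ Ioc (A n) (B n), r (i - j)
        = ∑' k, (((B n - A n - |k|).toNat : ℝ) / n) • r k := by
    intro n
    simp_rw [sum_Ioc_sum_Ioc_sub_eq_tsum, ← tsum_const_smul'', ← Nat.cast_smul_eq_nsmul ℝ,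
      smul_smul, one_div_mul_eq_div]
  simp_rw [hweights, ← tsum_const_smul'']
  refine tendsto_tsum_of_dominated_convergence (hr.mul_left (|c| + 1))
    (fun k => (tendsto_toNat_sub_abs_div_atTop hc hAB k).smul_const (r k)) ?_
  filter_upwards [eventually_toNat_sub_abs_div_le hAB] with n hn k
  rw [norm_smul, Real.norm_of_nonneg (by positivity)]
  exact mul_le_mul_of_nonneg_right (hn k) (norm_nonneg _)

lemma tendsto_floor_mul_div_atTop (x : ℝ) :
    Tendsto (fun n : ℕ => (⌊(n : ℝ) * x⌋ : ℝ) / n) atTop (𝓝 x) := by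
  have hlow : Tendsto (fun n : ℕ => x - 1 / (n : ℝ)) atTop (𝓝 (x - 0)) :=
    tendsto_const_nhds.sub tendsto_one_div_atTop_nhds_zero_nat
  rw [sub_zero] at hlow
  refine tendsto_of_tendsto_of_tendsto_of_le_of_le' hlow tendsto_const_nhds ?_ ?_
  · filter_upwards [eventually_gt_atTop 0] with n hn
    rw [le_div_iff₀ (Nat.cast_pos.2 hn), sub_mul, one_div_mul_cancel (Nat.cast_pos.2 hn).ne',
      mul_comm]
    exact (Int.sub_one_lt_floor _).le
  · filter_upwards [eventually_gt_atTop 0] with n hn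
    rw [div_le_iff₀ (Nat.cast_pos.2 hn), mul_comm]
    exact Int.floor_le _

theorem stmt_10_general (r : ℤ → ℝ) (hr : Summable (fun j : ℤ => |r j|))
    (a b : ℝ) (hab : a < b) :
    Tendsto
      (fun n : ℕ => (1 / (n : ℝ)) *
        ∑ i ∈ Finset.Ioc ⌊(n : ℝ) * a⌋ ⌊(n : ℝ) * b⌋,
          ∑ j ∈ Finset.Ioc ⌊(n : ℝ) * a⌋ ⌊(n : ℝ) * b⌋, r (i - j))
      atTop (nhds ((b - a) * ∑' j : ℤ, r j)) := by
  have hfloor : Tendsto (fun n : ℕ => ((⌊(n : ℝ) * b⌋ - ⌊(n : ℝ) * a⌋ : ℤ) : ℝ) / n) atTop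
      (𝓝 (b - a)) := by
    simpa only [Int.cast_sub, sub_div] using
      (tendsto_floor_mul_div_atTop b).sub (tendsto_floor_mul_div_atTop a)
  exact tendsto_smul_sum_Ioc_sum_Ioc_sub (by simpa only [Real.norm_eq_abs] using hr)
    (sub_nonneg.2 hab.le) hfloor

/-- Diagonal block limit: if `∑_{j∈ℤ} |r(j)| < ∞` and `0 ≤ a < b`, then
`(1/n) ∑_{i=⌊na⌋+1}^{⌊nb⌋} ∑_{j=⌊na⌋+1}^{⌊nb⌋} r(i−j) → (b−a) ∑_{j∈ℤ} r(j)`. -/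
theorem stmt_10 (r : ℤ → ℝ) (hr : Summable (fun j : ℤ => |r j|))
    (a b : ℝ) (ha : 0 ≤ a) (hab : a < b) :
    Tendsto
      (fun n : ℕ => (1 / (n : ℝ)) *
        ∑ i ∈ Finset.Ioc ⌊(n : ℝ) * a⌋ ⌊(n : ℝ) * b⌋,
          ∑ j ∈ Finset.Ioc ⌊(n : ℝ) * a⌋ ⌊(n : ℝ) * b⌋, r (i - j))
      atTop (nhds ((b - a) * ∑' j : ℤ, r j)) :=
  stmt_10_general r hr a b hab
end

section
/- Let κ ≥ 1 be an odd integer, let ρ ∈ [−1,1], and let (X,Y) be centered jointly Gaussian random variables with E[X²] = E[Y²] = 1 and E[XY] = ρ (i.e. their joint law is the centered Gaussian measure on ℝ² with covariance matrix [[1,ρ],[ρ,1]]). Then |E[X^κ · Y^κ]| ≤ (2κ − 1)!!·|ρ|, where (2κ−1)!! = 1·3·5⋯(2κ−1) is the κth even Gaussian moment E[X^{2κ}]. -/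
/-!
Expand `y ^ κ` in the probabilists' Hermite polynomials: `y ^ κ = ∑ a_q He_q` with `a_q ≥ 0`,
since `X * He_q = He_(q+1) + q He_(q-1)` keeps the cone spanned by the `He_q` stable under
multiplication by `X`. For `Y = ρX + √(1 - ρ²) Z` one has `𝔼[He_q(Y) | X] = ρ ^ q He_q(X)`, so
`𝔼[X^κ Y^κ] = ∑ a_q ρ^q 𝔼[X^κ He_q(X)]`. By Stein's lemma `𝔼[X^κ He_q(X)] = 𝔼[(d/dx)^q X^κ] ≥ 0`,
and for `q = 0` this is an odd moment, hence zero. Therefore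
`|𝔼[X^κ Y^κ]| ≤ |ρ| ∑ a_q 𝔼[X^κ He_q(X)] = |ρ| 𝔼[X^(2κ)] = (2κ - 1)‼ |ρ|`.
-/

open MeasureTheory ProbabilityTheory Polynomial
open scoped NNReal

namespace GaussianHermite

lemma abs_le_of_mem_hull {M : Type*} [AddCommGroup M] [Module ℝ M] {s : Set M}
    {F G : M →ₗ[ℝ] ℝ} (h : ∀ x ∈ s, |F x| ≤ G x) {x : M} (hx : x ∈ PointedCone.hull ℝ s) :
    |F x| ≤ G x := by
  induction hx using Submodule.span_induction with
  | mem x hx => exact h x hx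
  | zero => simp
  | add x y _ _ hx hy => simpa only [map_add] using (abs_add_le _ _).trans (add_le_add hx hy)
  | smul c x _ hx =>
    obtain ⟨c, hc⟩ := c
    simp only [Nonneg.mk_smul, map_smul, smul_eq_mul, abs_mul, abs_of_nonneg hc]
    exact mul_le_mul_of_nonneg_left hx hc

section GaussianReal

variable {μ : ℝ} {v : ℝ≥0}

lemma hasDerivAt_gaussianPDFReal (x : ℝ) :
    HasDerivAt (gaussianPDFReal μ v) (-(x - μ) / v * gaussianPDFReal μ v x) x := by
  rw [gaussianPDFReal_def]
  refine (((((hasDerivAt_id' x).sub_const μ).pow 2).neg.div_const (2 * (v : ℝ))).exp.const_mul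
    _).congr_deriv ?_
  simp only [Pi.pow_apply, Pi.neg_apply]
  ring

lemma integrable_gaussianReal_iff (hv : v ≠ 0) {f : ℝ → ℝ} :
    Integrable f (gaussianReal μ v) ↔ Integrable (fun x => gaussianPDFReal μ v x * f x) := by
  rw [gaussianReal_of_var_ne_zero μ hv, integrable_withDensity_iff_integrable_smul'
    (measurable_gaussianPDF μ v) (ae_of_all _ fun _ => ENNReal.ofReal_lt_top)]
  simp [gaussianPDF, ENNReal.toReal_ofReal (gaussianPDFReal_nonneg μ v _)]

theorem integral_sub_mul_gaussianReal {f f' : ℝ → ℝ} (hf : ∀ x, HasDerivAt f (f' x) x)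
    (hf_int : Integrable f (gaussianReal μ v)) (hf'_int : Integrable f' (gaussianReal μ v))
    (hxf_int : Integrable (fun x => (x - μ) * f x) (gaussianReal μ v)) :
    ∫ x, (x - μ) * f x ∂gaussianReal μ v = v * ∫ x, f' x ∂gaussianReal μ v := by
  rcases eq_or_ne v 0 with rfl | hv
  · simp
  rw [integrable_gaussianReal_iff hv] at hf_int hf'_int hxf_int
  simp only [integral_gaussianReal_eq_integral_smul hv, smul_eq_mul]
  have hv' : (v : ℝ) ≠ 0 := by exact_mod_cast hv
  have ibp := integral_mul_deriv_eq_deriv_mul_of_integrable (fun x _ => hf x)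
    (fun x _ => hasDerivAt_gaussianPDFReal (μ := μ) (v := v) x)
    ((hxf_int.const_mul (-(v : ℝ)⁻¹)).congr
      (ae_of_all _ fun x => by simp only [Pi.mul_apply]; field_simp))
    (hf'_int.congr (ae_of_all _ fun x => mul_comm _ _))
    (hf_int.congr (ae_of_all _ fun x => mul_comm _ _))
  have hl : ∫ x, gaussianPDFReal μ v x * ((x - μ) * f x)
      = -v * ∫ x, f x * (-(x - μ) / v * gaussianPDFReal μ v x) := by
    rw [← integral_const_mul]
    congr 1 with x
    field_simp
  rw [hl, ibp]
  simp only [mul_comm (f' _)]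
  ring

lemma integrable_pow_gaussianReal (n : ℕ) : Integrable (fun x => x ^ n) (gaussianReal μ v) :=
  integrable_pow_of_mem_interior_integrableExpSet (X := id) (by simp) n

lemma integrable_eval_gaussianReal (p : ℝ[X]) :
    Integrable (fun x => p.eval x) (gaussianReal μ v) := by
  induction p using Polynomial.induction_on' with
  | add p q hp hq => simp only [eval_add]; exact hp.add hq
  | monomial n c => simpa using (integrable_pow_gaussianReal n).const_mul c

end GaussianReal

section Expect

noncomputable def gaussianExpect : ℝ[X] →ₗ[ℝ] ℝ where
  toFun p := ∫ x, p.eval x ∂gaussianReal 0 1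
  map_add' p q := by
    simp only [eval_add]
    exact integral_add (integrable_eval_gaussianReal p) (integrable_eval_gaussianReal q)
  map_smul' c p := by simp only [eval_smul, smul_eq_mul, integral_const_mul, RingHom.id_apply]

lemma gaussianExpect_apply (p : ℝ[X]) : gaussianExpect p = ∫ x, p.eval x ∂gaussianReal 0 1 := rfl

lemma gaussianExpect_one : gaussianExpect 1 = 1 := by simp [gaussianExpect_apply]

lemma gaussianExpect_C_mul (c : ℝ) (p : ℝ[X]) :
    gaussianExpect (C c * p) = c * gaussianExpect p := by
  rw [C_mul', map_smul, smul_eq_mul]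

lemma gaussianExpect_X_mul (p : ℝ[X]) : gaussianExpect (X * p) = gaussianExpect (derivative p) := by
  have hXp : Integrable (fun x => (x - 0) * p.eval x) (gaussianReal 0 1) := by
    have hint := integrable_eval_gaussianReal (μ := 0) (v := 1) (X * p)
    simpa using hint
  simpa [gaussianExpect_apply] using integral_sub_mul_gaussianReal (fun x => p.hasDerivAt x)
    (integrable_eval_gaussianReal p) (integrable_eval_gaussianReal _) hXp

lemma gaussianExpect_X : gaussianExpect X = 0 := by
  simpa using gaussianExpect_X_mul 1

lemma gaussianExpect_X_pow_add_two (n : ℕ) :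
    gaussianExpect (X ^ (n + 2)) = (n + 1) * gaussianExpect (X ^ n) := by
  rw [pow_succ', gaussianExpect_X_mul, derivative_X_pow, gaussianExpect_C_mul]
  push_cast
  rfl

lemma gaussianExpect_X_pow_nonneg (n : ℕ) : 0 ≤ gaussianExpect (X ^ n) := by
  induction n using Nat.twoStepInduction with
  | zero => simp [gaussianExpect_one]
  | one => simp [gaussianExpect_X]
  | more n ih _ => rw [gaussianExpect_X_pow_add_two]; positivity

lemma gaussianExpect_X_pow_of_odd {n : ℕ} (hn : Odd n) : gaussianExpect (X ^ n) = 0 := by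
  obtain ⟨k, rfl⟩ := hn
  induction k with
  | zero => simp [gaussianExpect_X]
  | succ k ih =>
    rw [show 2 * (k + 1) + 1 = 2 * k + 1 + 2 by ring, gaussianExpect_X_pow_add_two, ih, mul_zero]

lemma gaussianExpect_X_pow_two_mul (k : ℕ) :
    gaussianExpect (X ^ (2 * k)) = (2 * k - 1).doubleFactorial := by
  induction k with
  | zero => simp [gaussianExpect_one]
  | succ k ih =>
    rw [show 2 * (k + 1) = 2 * k + 2 by ring, gaussianExpect_X_pow_add_two, ih,
      show 2 * k + 2 - 1 = 2 * k + 1 by omega]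
    rcases k with _ | k
    · simp
    · rw [show 2 * (k + 1) + 1 = (2 * (k + 1) - 1) + 2 by omega, Nat.doubleFactorial_add_two]
      push_cast [show 1 ≤ 2 * (k + 1) by omega]
      ring

end Expect

section Hermite

noncomputable def He (n : ℕ) : ℝ[X] := (hermite n).map (Int.castRingHom ℝ)

lemma He_zero : He 0 = 1 := by simp [He]

lemma He_succ (n : ℕ) : He (n + 1) = X * He n - derivative (He n) := by
  simp [He, hermite_succ, derivative_map]

lemma derivative_He_succ (n : ℕ) : derivative (He (n + 1)) = ((n : ℝ) + 1) • He n := by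
  induction n with
  | zero => simp [He_succ, He_zero]
  | succ n ih =>
    rw [He_succ (n + 1), derivative_sub, derivative_mul, derivative_X, ih, derivative_smul,
      He_succ n]
    push_cast
    rw [one_mul, mul_smul_comm]
    module

lemma He_add_two (n : ℕ) : He (n + 2) = X * He (n + 1) - ((n : ℝ) + 1) • He n := by
  rw [He_succ (n + 1), derivative_He_succ]

lemma X_mul_mem_hull_range_He {p : ℝ[X]} (hp : p ∈ PointedCone.hull ℝ (Set.range He)) :
    X * p ∈ PointedCone.hull ℝ (Set.range He) := by
  induction hp using Submodule.span_induction with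
  | mem _ hq =>
    obtain ⟨q, rfl⟩ := hq
    rcases q with _ | q
    · exact PointedCone.subset_hull ⟨1, by simp [He_succ, He_zero]⟩
    · rw [show X * He (q + 1) = He (q + 2) + ((q : ℝ) + 1) • He q by rw [He_add_two]; abel]
      exact add_mem (PointedCone.subset_hull ⟨q + 2, rfl⟩)
        (PointedCone.smul_mem _ (by positivity) (PointedCone.subset_hull ⟨q, rfl⟩))
  | zero => simp
  | add p q _ _ hp hq => rw [mul_add]; exact add_mem hp hq
  | smul c p _ hp => rw [mul_smul_comm]; exact Submodule.smul_mem _ c hp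

lemma X_pow_mem_hull_range_He (k : ℕ) : (X ^ k : ℝ[X]) ∈ PointedCone.hull ℝ (Set.range He) := by
  induction k with
  | zero => exact PointedCone.subset_hull ⟨0, He_zero⟩
  | succ k ih => rw [pow_succ']; exact X_mul_mem_hull_range_He ih

lemma gaussianExpect_mul_He_succ (p : ℝ[X]) (q : ℕ) :
    gaussianExpect (p * He (q + 1)) = gaussianExpect (derivative p * He q) := by
  have h : p * He (q + 1) = X * (p * He q) - p * derivative (He q) := by rw [He_succ]; ring
  rw [h, map_sub, gaussianExpect_X_mul, derivative_mul, map_add, add_sub_cancel_right]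

lemma gaussianExpect_mul_He (p : ℝ[X]) (q : ℕ) :
    gaussianExpect (p * He q) = gaussianExpect (derivative^[q] p) := by
  induction q generalizing p with
  | zero => simp [He_zero]
  | succ q ih => rw [gaussianExpect_mul_He_succ, ih, Function.iterate_succ_apply]

lemma gaussianExpect_X_pow_mul_He_nonneg (k q : ℕ) : 0 ≤ gaussianExpect (X ^ k * He q) := by
  rw [gaussianExpect_mul_He, iterate_derivative_X_pow_eq_smul, map_smul]
  exact smul_nonneg (Nat.cast_nonneg _) (gaussianExpect_X_pow_nonneg _)

lemma gaussianExpect_He_comp {ρ s : ℝ} (hρs : ρ ^ 2 + s ^ 2 = 1) (a : ℝ) (q : ℕ) :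
    gaussianExpect ((He q).comp (C (ρ * a) + C s * X)) = ρ ^ q * (He q).eval a := by
  set L : ℝ[X] := C (ρ * a) + C s * X
  have hE_L_mul (p : ℝ[X]) :
      gaussianExpect (L * p) = ρ * a * gaussianExpect p + s * gaussianExpect (derivative p) := by
    rw [add_mul, mul_assoc, map_add, gaussianExpect_C_mul, gaussianExpect_C_mul,
      gaussianExpect_X_mul]
  induction q using Nat.twoStepInduction with
  | zero => simp [He_zero, gaussianExpect_one]
  | one =>
    have h := hE_L_mul 1
    simp only [mul_one, derivative_one, map_zero, gaussianExpect_one] at h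
    simp [He_succ, He_zero, h]
  | more n ih ih₁ =>
    have hderiv : derivative ((He (n + 1)).comp L) = C s * ((n : ℝ) + 1) • (He n).comp L := by
      simp [L, derivative_comp, derivative_He_succ, smul_comp]
    rw [He_add_two, sub_comp, mul_comp, X_comp, smul_comp, map_sub, map_smul, hE_L_mul, hderiv,
      mul_smul_comm, map_smul, gaussianExpect_C_mul, ih, ih₁]
    simp only [eval_sub, eval_mul, eval_X, eval_smul, smul_eq_mul]
    linear_combination ((n : ℝ) + 1) * ρ ^ n * eval a (He n) * hρs

end Hermite

section Correlated

lemma integrable_pow_mul_eval_prod {μ₁ μ₂ : ℝ} {v₁ v₂ : ℝ≥0} (k : ℕ) (a b : ℝ) (p : ℝ[X]) :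
    Integrable (fun w : ℝ × ℝ => w.1 ^ k * p.eval (a * w.1 + b * w.2))
      ((gaussianReal μ₁ v₁).prod (gaussianReal μ₂ v₂)) := by
  induction p using Polynomial.induction_on' with
  | add p q hp hq => simp only [eval_add, mul_add]; exact hp.add hq
  | monomial n c =>
    have hexpand : (fun w : ℝ × ℝ => w.1 ^ k * (monomial n c).eval (a * w.1 + b * w.2))
        = fun w => ∑ j ∈ Finset.range (n + 1),
            (c * a ^ j * b ^ (n - j) * n.choose j) * (w.1 ^ (k + j) * w.2 ^ (n - j)) := by
      ext w
      rw [eval_monomial, add_pow, Finset.mul_sum, Finset.mul_sum]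
      refine Finset.sum_congr rfl fun j _ => ?_
      ring
    rw [hexpand]
    exact integrable_finsetSum _ fun j _ =>
      ((integrable_pow_gaussianReal _).mul_prod (integrable_pow_gaussianReal _)).const_mul _

noncomputable def correlatedExpect (k : ℕ) (ρ s : ℝ) : ℝ[X] →ₗ[ℝ] ℝ where
  toFun p := ∫ w : ℝ × ℝ, w.1 ^ k * p.eval (ρ * w.1 + s * w.2)
    ∂(gaussianReal 0 1).prod (gaussianReal 0 1)
  map_add' p q := by
    simp only [eval_add, mul_add]
    exact integral_add (integrable_pow_mul_eval_prod k ρ s p) (integrable_pow_mul_eval_prod k ρ s q)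
  map_smul' c p := by
    simp only [eval_smul, smul_eq_mul, mul_left_comm _ c, integral_const_mul, RingHom.id_apply]

lemma correlatedExpect_He {ρ s : ℝ} (hρs : ρ ^ 2 + s ^ 2 = 1) (k q : ℕ) :
    correlatedExpect k ρ s (He q) = ρ ^ q * gaussianExpect (X ^ k * He q) := by
  have hinner (x : ℝ) : ∫ z, x ^ k * (He q).eval (ρ * x + s * z) ∂gaussianReal 0 1
      = ρ ^ q * (X ^ k * He q).eval x := by
    have h := gaussianExpect_He_comp hρs x q
    simp only [gaussianExpect_apply, eval_comp, eval_add, eval_mul, eval_C, eval_X] at h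
    rw [integral_const_mul, h, eval_mul, eval_pow, eval_X]
    ring
  simp only [correlatedExpect, LinearMap.coe_mk, AddHom.coe_mk]
  rw [integral_prod _ (integrable_pow_mul_eval_prod k ρ s (He q))]
  simp only [hinner, integral_const_mul, gaussianExpect_apply]

theorem abs_correlatedExpect_X_pow_le {κ : ℕ} (hκ : Odd κ) {ρ s : ℝ} (hρ : |ρ| ≤ 1)
    (hρs : ρ ^ 2 + s ^ 2 = 1) :
    |correlatedExpect κ ρ s (X ^ κ)| ≤ (2 * κ - 1).doubleFactorial * |ρ| := by
  have hgen (q : ℕ) : |correlatedExpect κ ρ s (He q)| ≤ |ρ| * gaussianExpect (X ^ κ * He q) := by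
    have hB := gaussianExpect_X_pow_mul_He_nonneg κ q
    rw [correlatedExpect_He hρs, abs_mul, abs_of_nonneg hB, abs_pow]
    rcases q with _ | q
    · simp [He_zero, gaussianExpect_X_pow_of_odd hκ]
    · exact mul_le_mul_of_nonneg_right (pow_le_of_le_one (abs_nonneg ρ) hρ q.succ_ne_zero) hB
  calc |correlatedExpect κ ρ s (X ^ κ)| ≤ |ρ| * gaussianExpect (X ^ κ * X ^ κ) :=
        abs_le_of_mem_hull (G := |ρ| • gaussianExpect ∘ₗ LinearMap.mulLeft ℝ (X ^ κ))
          (by simpa using hgen) (X_pow_mem_hull_range_He κ)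
    _ = (2 * κ - 1).doubleFactorial * |ρ| := by
        rw [← pow_add, ← two_mul, gaussianExpect_X_pow_two_mul, mul_comm]

end Correlated

end GaussianHermite

open GaussianHermite in
theorem stmt_12_general (κ : ℕ) (hodd : Odd κ) (ρ : ℝ) (hρ : ρ ∈ Set.Icc (-1 : ℝ) 1) :
    |∫ p : ℝ × ℝ, p.1 ^ κ * p.2 ^ κ
        ∂(((gaussianReal 0 1).prod (gaussianReal 0 1)).map
            (fun q : ℝ × ℝ => (q.1, ρ * q.1 + Real.sqrt (1 - ρ ^ 2) * q.2)))|
      ≤ (Nat.doubleFactorial (2 * κ - 1) : ℝ) * |ρ| := by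
  have hρs : ρ ^ 2 + √(1 - ρ ^ 2) ^ 2 = 1 := by
    rw [Real.sq_sqrt (by nlinarith [hρ.1, hρ.2])]
    ring
  rw [integral_map (by fun_prop) (by fun_prop)]
  simpa [correlatedExpect] using abs_correlatedExpect_X_pow_le hodd (abs_le.2 hρ) hρs

/-- For odd `κ ≥ 1` and a centered Gaussian pair `(X,Y)` with unit variances and correlation `ρ`
(realized as the joint law of `(X, ρX + √(1−ρ²)Z)` for independent standard Gaussians `X, Z`),
one has `|E[X^κ Y^κ]| ≤ (2κ−1)‼ |ρ|`. -/
theorem stmt_12 (κ : ℕ) (hκ : 1 ≤ κ) (hodd : Odd κ) (ρ : ℝ) (hρ : ρ ∈ Set.Icc (-1 : ℝ) 1) :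
    |∫ p : ℝ × ℝ, p.1 ^ κ * p.2 ^ κ
        ∂(((gaussianReal 0 1).prod (gaussianReal 0 1)).map
            (fun q : ℝ × ℝ => (q.1, ρ * q.1 + Real.sqrt (1 - ρ ^ 2) * q.2)))|
      ≤ (Nat.doubleFactorial (2 * κ - 1) : ℝ) * |ρ| :=
  stmt_12_general κ hodd ρ hρ
end
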